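/- arXiv:2401.16411 — 3 statements merged into one kernel-verified Lean document; each statement's English description precedes it below -/
import Mathlib

section
/- Let n < m ≤ N, Φ ∈ ℝ^{N×m} with ΦᵀΦ = I_m, S ∈ ℝ^{N×n} with SᵀS = I_n, M := SᵀΦ with MMᵀ invertible, M⁺ := Mᵀ(MMᵀ)⁻¹, and Z ∈ ℝ^{m×(m−n)} with ZᵀZ = I_{m−n} and MZ = 0. Fix u ∈ ℝ^N and set ẑ := ZZᵀΦᵀu. Then ẑ is the unique minimizer over all z ∈ ℝ^m with Mz = 0 of the reconstruction error ‖ΦM⁺Sᵀu + Φz − u‖: for every z ∈ ker M, ‖ΦM⁺Sᵀu + Φẑ − u‖ ≤ ‖ΦM⁺Sᵀu + Φz − u‖, with equality only if z = ẑ. -/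
/-!
The residual `r(z) = ΦM⁺Sᵀu + Φz − u` satisfies `r(z) = r(ẑ) + Φ(z − ẑ)`. Since `ZZᵀ` is the
orthogonal projector onto `ker M = range Z`, the vector `Φᵀ r(ẑ) = M⁺Sᵀu + (ZZᵀ − I)Φᵀu` is
orthogonal to `ker M`: the rows of `M⁺ᵀ = (MMᵀ)⁻¹M` vanish on `ker M`, and `ZZᵀ − I` is symmetric
and kills `ker M`. Hence `r(ẑ) ⊥ Φ(z − ẑ)`, and Pythagoras together with the injectivity of `Φ`
gives the claim.
-/

open Matrix RealInnerProductSpace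

/-- A matrix acting on Euclidean space. -/
noncomputable def aV {a b : ℕ} (A : Matrix (Fin a) (Fin b) ℝ)
    (x : EuclideanSpace ℝ (Fin b)) : EuclideanSpace ℝ (Fin a) :=
  Matrix.toEuclideanLin A x

section aV

variable {a b c : ℕ}

lemma aV_mul (A : Matrix (Fin a) (Fin b) ℝ) (B : Matrix (Fin b) (Fin c) ℝ)
    (x : EuclideanSpace ℝ (Fin c)) : aV (A * B) x = aV A (aV B x) := by
  simp [aV]

lemma aV_one (x : EuclideanSpace ℝ (Fin a)) : aV (1 : Matrix (Fin a) (Fin a) ℝ) x = x := by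
  simp [aV]

lemma aV_zero_left (x : EuclideanSpace ℝ (Fin b)) :
    aV (0 : Matrix (Fin a) (Fin b) ℝ) x = 0 := by
  simp [aV]

lemma aV_zero_right (A : Matrix (Fin a) (Fin b) ℝ) : aV A 0 = 0 :=
  map_zero _

lemma aV_add (A : Matrix (Fin a) (Fin b) ℝ) (x y : EuclideanSpace ℝ (Fin b)) :
    aV A (x + y) = aV A x + aV A y :=
  map_add _ x y

lemma aV_sub (A : Matrix (Fin a) (Fin b) ℝ) (x y : EuclideanSpace ℝ (Fin b)) :
    aV A (x - y) = aV A x - aV A y :=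
  map_sub _ x y

lemma inner_aV_left (A : Matrix (Fin a) (Fin b) ℝ) (x : EuclideanSpace ℝ (Fin b))
    (y : EuclideanSpace ℝ (Fin a)) : ⟪aV A x, y⟫ = ⟪x, aV Aᵀ y⟫ := by
  rw [aV, aV, ← conjTranspose_eq_transpose_of_trivial, toEuclideanLin_conjTranspose_eq_adjoint,
    LinearMap.adjoint_inner_right]

lemma aV_aV_of_mul_eq_one {A : Matrix (Fin a) (Fin b) ℝ} {B : Matrix (Fin b) (Fin a) ℝ}
    (h : B * A = 1) (x : EuclideanSpace ℝ (Fin b)) : aV B (aV A x) = x := by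
  rw [← aV_mul, h, aV_one]

lemma aV_injective_of_mul_eq_one {A : Matrix (Fin a) (Fin b) ℝ} {B : Matrix (Fin b) (Fin a) ℝ}
    (h : B * A = 1) : Function.Injective (aV A) :=
  Function.LeftInverse.injective (aV_aV_of_mul_eq_one h)

lemma aV_surjective_of_mul_eq_one {A : Matrix (Fin a) (Fin b) ℝ} {B : Matrix (Fin b) (Fin a) ℝ}
    (h : A * B = 1) : Function.Surjective (aV A) := fun y =>
  ⟨aV B y, aV_aV_of_mul_eq_one h y⟩

end aV

section kernel

variable {m n : ℕ} {M : Matrix (Fin n) (Fin m) ℝ} {Z : Matrix (Fin m) (Fin (m - n)) ℝ}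

/-- `Z` is injective with image in `ker M`, and `ker M` has dimension `m - n` by rank–nullity. -/
lemma range_toEuclideanLin_eq_ker (hM : Function.Surjective (aV M))
    (hZ : Function.Injective (aV Z)) (hMZ : M * Z = 0) :
    LinearMap.range (toEuclideanLin Z) = LinearMap.ker (toEuclideanLin M) := by
  have hle : LinearMap.range (toEuclideanLin Z) ≤ LinearMap.ker (toEuclideanLin M) := by
    rintro _ ⟨y, rfl⟩
    exact (aV_mul M Z y).symm.trans (by rw [hMZ, aV_zero_left])
  refine Submodule.eq_of_le_of_finrank_eq hle ?_
  have hrank := LinearMap.finrank_range_add_finrank_ker (toEuclideanLin M)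
  rw [LinearMap.range_eq_top.mpr hM, finrank_top, finrank_euclideanSpace_fin,
    finrank_euclideanSpace_fin] at hrank
  rw [LinearMap.finrank_range_of_inj hZ, finrank_euclideanSpace_fin]
  omega

lemma aV_mul_transpose_self_of_aV_eq_zero (hMM : IsUnit (M * Mᵀ)) (hZ : Zᵀ * Z = 1)
    (hMZ : M * Z = 0) {w : EuclideanSpace ℝ (Fin m)} (hw : aV M w = 0) :
    aV (Z * Zᵀ) w = w := by
  have hright : M * (Mᵀ * (M * Mᵀ)⁻¹) = 1 := by
    rw [← Matrix.mul_assoc, mul_nonsing_inv _ ((isUnit_iff_isUnit_det _).mp hMM)]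
  have hwZ : w ∈ LinearMap.range (toEuclideanLin Z) := by
    rw [range_toEuclideanLin_eq_ker (aV_surjective_of_mul_eq_one hright)
      (aV_injective_of_mul_eq_one hZ) hMZ]
    exact hw
  obtain ⟨y, rfl⟩ := hwZ
  change aV (Z * Zᵀ) (aV Z y) = aV Z y
  rw [aV_mul, aV_aV_of_mul_eq_one hZ]

end kernel

lemma inner_aV_pinv_eq_zero_of_aV_eq_zero {m n : ℕ} {M : Matrix (Fin n) (Fin m) ℝ}
    {w : EuclideanSpace ℝ (Fin m)} (hw : aV M w = 0) (y : EuclideanSpace ℝ (Fin n)) :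
    ⟪aV (Mᵀ * (M * Mᵀ)⁻¹) y, w⟫ = 0 := by
  rw [inner_aV_left, transpose_mul, transpose_transpose, aV_mul, hw, aV_zero_right,
    inner_zero_right]

lemma inner_aV_mul_transpose_self_sub_eq_zero {m k : ℕ} {Z : Matrix (Fin m) (Fin k) ℝ}
    {w : EuclideanSpace ℝ (Fin m)} (hw : aV (Z * Zᵀ) w = w) (v : EuclideanSpace ℝ (Fin m)) :
    ⟪aV (Z * Zᵀ) v - v, w⟫ = 0 := by
  rw [inner_sub_left, inner_aV_left, transpose_mul, transpose_transpose, hw, sub_self]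

lemma inner_sdeim_residual_eq_zero {N m n : ℕ} {Φ : Matrix (Fin N) (Fin m) ℝ}
    (S : Matrix (Fin N) (Fin n) ℝ) (hΦ : Φᵀ * Φ = 1) {M : Matrix (Fin n) (Fin m) ℝ}
    {Z : Matrix (Fin m) (Fin (m - n)) ℝ} (hZker : ∀ w, aV M w = 0 → aV (Z * Zᵀ) w = w)
    (u : EuclideanSpace ℝ (Fin N)) {w : EuclideanSpace ℝ (Fin m)} (hw : aV M w = 0) :
    ⟪aV (Φ * (Mᵀ * (M * Mᵀ)⁻¹) * Sᵀ) u + aV Φ (aV (Z * Zᵀ * Φᵀ) u) - u, aV Φ w⟫ = 0 := by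
  have hΦres : aV Φᵀ (aV (Φ * (Mᵀ * (M * Mᵀ)⁻¹) * Sᵀ) u + aV Φ (aV (Z * Zᵀ * Φᵀ) u) - u)
      = aV (Mᵀ * (M * Mᵀ)⁻¹) (aV Sᵀ u) + (aV (Z * Zᵀ) (aV Φᵀ u) - aV Φᵀ u) := by
    rw [aV_sub, aV_add, aV_mul, aV_mul, aV_aV_of_mul_eq_one hΦ, aV_aV_of_mul_eq_one hΦ,
      aV_mul (Z * Zᵀ)]
    abel
  rw [real_inner_comm, inner_aV_left, real_inner_comm, hΦres, inner_add_left,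
    inner_aV_pinv_eq_zero_of_aV_eq_zero hw,
    inner_aV_mul_transpose_self_sub_eq_zero (hZker w hw), add_zero]

lemma norm_le_norm_add_of_inner_eq_zero {E : Type*} [NormedAddCommGroup E] [InnerProductSpace ℝ E]
    {x y : E} (h : ⟪x, y⟫ = 0) : ‖x‖ ≤ ‖x + y‖ ∧ (‖x‖ = ‖x + y‖ → y = 0) := by
  have hpyth := norm_add_sq_eq_norm_sq_add_norm_sq_real h
  refine ⟨?_, fun heq => ?_⟩
  · nlinarith [norm_nonneg x, norm_nonneg (x + y), mul_self_nonneg ‖y‖]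
  · rw [← heq] at hpyth
    exact norm_eq_zero.mp (mul_self_eq_zero.mp (by linarith))

theorem optimal_kernel_vector_general (N m n : ℕ)
    (Φ : Matrix (Fin N) (Fin m) ℝ) (S : Matrix (Fin N) (Fin n) ℝ)
    (hΦ : Φᵀ * Φ = 1)
    (M : Matrix (Fin n) (Fin m) ℝ)
    (hMM : IsUnit (M * Mᵀ))
    (Mplus : Matrix (Fin m) (Fin n) ℝ) (hMp : Mplus = Mᵀ * (M * Mᵀ)⁻¹)
    (Z : Matrix (Fin m) (Fin (m - n)) ℝ) (hZ : Zᵀ * Z = 1) (hMZ : M * Z = 0)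
    (u : EuclideanSpace ℝ (Fin N))
    (zhat : EuclideanSpace ℝ (Fin m)) (hzhat : zhat = aV (Z * Zᵀ * Φᵀ) u) :
    ∀ z : EuclideanSpace ℝ (Fin m), aV M z = 0 →
      ‖aV (Φ * Mplus * Sᵀ) u + aV Φ zhat - u‖ ≤ ‖aV (Φ * Mplus * Sᵀ) u + aV Φ z - u‖ ∧
      (‖aV (Φ * Mplus * Sᵀ) u + aV Φ zhat - u‖ = ‖aV (Φ * Mplus * Sᵀ) u + aV Φ z - u‖ →
        z = zhat) := by
  intro z hz
  have hzhat_ker : aV M zhat = 0 := by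
    rw [hzhat, ← aV_mul, ← Matrix.mul_assoc, ← Matrix.mul_assoc, hMZ, Matrix.zero_mul,
      Matrix.zero_mul, aV_zero_left]
  have hdiff_ker : aV M (z - zhat) = 0 := by rw [aV_sub, hz, hzhat_ker, sub_zero]
  have horth := inner_sdeim_residual_eq_zero S hΦ
    (fun w => aV_mul_transpose_self_of_aV_eq_zero hMM hZ hMZ) u hdiff_ker
  rw [← hMp, ← hzhat] at horth
  have hsplit : aV (Φ * Mplus * Sᵀ) u + aV Φ z - u
      = aV (Φ * Mplus * Sᵀ) u + aV Φ zhat - u + aV Φ (z - zhat) := by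
    rw [aV_sub]; abel
  obtain ⟨hle, heq⟩ := norm_le_norm_add_of_inner_eq_zero horth
  refine ⟨hsplit ▸ hle, fun h => ?_⟩
  have hΦdiff : aV Φ (z - zhat) = aV Φ 0 := (heq (hsplit ▸ h)).trans (aV_zero_right Φ).symm
  exact sub_eq_zero.mp (aV_injective_of_mul_eq_one hΦ hΦdiff)

/-- Optimal kernel vector (Lemma 3.7): `ẑ = ZZᵀΦᵀu` is the unique minimizer over
`z ∈ ker M` of the S-DEIM reconstruction error `‖ΦM⁺Sᵀu + Φz − u‖`. -/
theorem optimal_kernel_vector (N m n : ℕ) (hnm : n < m) (hmN : m ≤ N)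
    (Φ : Matrix (Fin N) (Fin m) ℝ) (S : Matrix (Fin N) (Fin n) ℝ)
    (hΦ : Φᵀ * Φ = 1) (hS : Sᵀ * S = 1)
    (M : Matrix (Fin n) (Fin m) ℝ) (hM : M = Sᵀ * Φ)
    (hMM : IsUnit (M * Mᵀ))
    (Mplus : Matrix (Fin m) (Fin n) ℝ) (hMp : Mplus = Mᵀ * (M * Mᵀ)⁻¹)
    (Z : Matrix (Fin m) (Fin (m - n)) ℝ) (hZ : Zᵀ * Z = 1) (hMZ : M * Z = 0)
    (u : EuclideanSpace ℝ (Fin N))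
    (zhat : EuclideanSpace ℝ (Fin m)) (hzhat : zhat = aV (Z * Zᵀ * Φᵀ) u) :
    ∀ z : EuclideanSpace ℝ (Fin m), aV M z = 0 →
      ‖aV (Φ * Mplus * Sᵀ) u + aV Φ zhat - u‖ ≤ ‖aV (Φ * Mplus * Sᵀ) u + aV Φ z - u‖ ∧
      (‖aV (Φ * Mplus * Sᵀ) u + aV Φ zhat - u‖ = ‖aV (Φ * Mplus * Sᵀ) u + aV Φ z - u‖ →
        z = zhat) :=
  optimal_kernel_vector_general N m n Φ S hΦ M hMM Mplus hMp Z hZ hMZ u zhat hzhat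
end

section
/- Let n < m ≤ N, Φ ∈ ℝ^{N×m} with ΦᵀΦ = I_m, S ∈ ℝ^{N×n} with SᵀS = I_n, M := SᵀΦ with MMᵀ invertible, M⁺ := Mᵀ(MMᵀ)⁻¹, and Z ∈ ℝ^{m×(m−n)} with ZᵀZ = I_{m−n} and MZ = 0. If u ∈ ℝ^N lies in the range of Φ (equivalently ΦΦᵀu = u), then the S-DEIM reconstruction with the optimal kernel vector ẑ := ZZᵀΦᵀu is exact: ΦM⁺Sᵀu + Φẑ = u. -/
open Matrix

/-! The residual `x - M⁺Mx` lies in `ker M`, which by rank–nullity has dimension `m - n`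
and therefore is exactly the column space of `Z`; as `Z` has orthonormal columns, `ZZᵀ` fixes it.
Since `ZᵀM⁺ = (MZ)ᵀ(MMᵀ)⁻¹ = 0`, this gives `M⁺M + ZZᵀ = 1`. For `u = ΦΦᵀu` we have
`Sᵀu = MΦᵀu`, so the reconstruction equals `Φ(M⁺M + ZZᵀ)Φᵀu = ΦΦᵀu = u`. -/

namespace Matrix

variable {K ι κ ν : Type*} [Field K] [Fintype ι] [Fintype κ] [Fintype ν] [DecidableEq ι]
  {M : Matrix ι κ K} {Z : Matrix κ ν K}

theorem mul_transpose_mul_inv_eq_one (hM : IsUnit (M * Mᵀ)) :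
    M * (Mᵀ * (M * Mᵀ)⁻¹) = 1 := by
  rw [← Matrix.mul_assoc]
  exact mul_nonsing_inv _ ((isUnit_iff_isUnit_det _).mp hM)

theorem finrank_ker_mulVecLin_of_isUnit_mul_transpose (hM : IsUnit (M * Mᵀ)) :
    Module.finrank K (LinearMap.ker M.mulVecLin) = Fintype.card κ - Fintype.card ι := by
  have hsurj : Function.Surjective M.mulVecLin :=
    mulVec_surjective_iff_exists_right_inverse.mpr ⟨_, mul_transpose_mul_inv_eq_one hM⟩
  have := LinearMap.finrank_range_add_finrank_ker M.mulVecLin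
  rw [LinearMap.range_eq_top.mpr hsurj, finrank_top, Module.finrank_fintype_fun_eq_card,
    Module.finrank_fintype_fun_eq_card] at this
  omega

theorem range_mulVecLin_eq_ker_mulVecLin [DecidableEq ν] (hM : IsUnit (M * Mᵀ))
    (hZ : Zᵀ * Z = 1) (hMZ : M * Z = 0)
    (hcard : Fintype.card ν = Fintype.card κ - Fintype.card ι) :
    LinearMap.range Z.mulVecLin = LinearMap.ker M.mulVecLin := by
  have hinj : Function.Injective Z.mulVecLin := fun x y hxy => by
    simpa [mulVec_mulVec, hZ] using congrArg (Zᵀ *ᵥ ·) hxy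
  refine Submodule.eq_of_le_of_finrank_eq ?_ ?_
  · rintro _ ⟨w, rfl⟩
    simp [mulVec_mulVec, hMZ]
  · rw [LinearMap.finrank_range_of_inj hinj, Module.finrank_fintype_fun_eq_card, hcard,
      finrank_ker_mulVecLin_of_isUnit_mul_transpose hM]

theorem mul_transpose_mulVec_of_mulVec_eq_zero [DecidableEq ν] (hM : IsUnit (M * Mᵀ))
    (hZ : Zᵀ * Z = 1) (hMZ : M * Z = 0)
    (hcard : Fintype.card ν = Fintype.card κ - Fintype.card ι) {x : κ → K}
    (hx : M *ᵥ x = 0) : (Z * Zᵀ) *ᵥ x = x := by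
  have hx' : x ∈ LinearMap.range Z.mulVecLin := by
    rw [range_mulVecLin_eq_ker_mulVecLin hM hZ hMZ hcard]
    exact hx
  obtain ⟨w, rfl⟩ := hx'
  simp [mulVec_mulVec, Matrix.mul_assoc, hZ]

theorem transpose_mul_inv_mul_add_mul_transpose_eq_one [DecidableEq κ] [DecidableEq ν]
    (hM : IsUnit (M * Mᵀ)) (hZ : Zᵀ * Z = 1) (hMZ : M * Z = 0)
    (hcard : Fintype.card ν = Fintype.card κ - Fintype.card ι) :
    Mᵀ * (M * Mᵀ)⁻¹ * M + Z * Zᵀ = 1 := by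
  set P := Mᵀ * (M * Mᵀ)⁻¹
  have hZP : Zᵀ * P = 0 := by
    rw [← Matrix.mul_assoc, ← transpose_mul, hMZ, transpose_zero, Matrix.zero_mul]
  refine ext_iff_mulVec.mpr fun x => ?_
  have hres : M *ᵥ (x - (P * M) *ᵥ x) = 0 := by
    rw [mulVec_sub, mulVec_mulVec, ← Matrix.mul_assoc, mul_transpose_mul_inv_eq_one hM,
      Matrix.one_mul, sub_self]
  have hfix := mul_transpose_mulVec_of_mulVec_eq_zero hM hZ hMZ hcard hres
  have hZZP : (Z * Zᵀ) *ᵥ ((P * M) *ᵥ x) = 0 := by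
    rw [mulVec_mulVec, Matrix.mul_assoc, ← Matrix.mul_assoc Zᵀ, hZP]
    simp
  rw [mulVec_sub, hZZP, sub_zero] at hfix
  rw [add_mulVec, hfix, one_mulVec, add_sub_cancel]

end Matrix

theorem SDEIM_exact_reconstruction_general (N m n : ℕ)
    (Φ : Matrix (Fin N) (Fin m) ℝ) (S : Matrix (Fin N) (Fin n) ℝ)
    (M : Matrix (Fin n) (Fin m) ℝ) (hM : M = Sᵀ * Φ)
    (hMM : IsUnit (M * Mᵀ))
    (Mplus : Matrix (Fin m) (Fin n) ℝ) (hMp : Mplus = Mᵀ * (M * Mᵀ)⁻¹)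
    (Z : Matrix (Fin m) (Fin (m - n)) ℝ) (hZ : Zᵀ * Z = 1) (hMZ : M * Z = 0)
    (u : Fin N → ℝ) (hu : Φ *ᵥ (Φᵀ *ᵥ u) = u) :
    Φ *ᵥ (Mplus *ᵥ (Sᵀ *ᵥ u)) + Φ *ᵥ ((Z * Zᵀ * Φᵀ) *ᵥ u) = u := by
  have hsample : Sᵀ *ᵥ u = M *ᵥ (Φᵀ *ᵥ u) := by
    conv_lhs => rw [← hu]
    rw [mulVec_mulVec, hM]
  have hsplit : Mplus * M + Z * Zᵀ = 1 := by
    rw [hMp]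
    exact transpose_mul_inv_mul_add_mul_transpose_eq_one hMM hZ hMZ (by simp)
  calc Φ *ᵥ (Mplus *ᵥ (Sᵀ *ᵥ u)) + Φ *ᵥ ((Z * Zᵀ * Φᵀ) *ᵥ u)
      = Φ *ᵥ ((Mplus * M + Z * Zᵀ) *ᵥ (Φᵀ *ᵥ u)) := by
        rw [hsample, ← mulVec_add, add_mulVec, mulVec_mulVec, mulVec_mulVec, mulVec_mulVec]
    _ = u := by rw [hsplit, one_mulVec, hu]

/-- Exact reconstruction (Corollary 3.9): with `n < m ≤ N`, if `u` lies in the range of `Φ`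
(i.e. `ΦΦᵀu = u`), then the S-DEIM reconstruction with the optimal kernel vector
`ẑ = ZZᵀΦᵀu` is exact: `ΦM⁺Sᵀu + Φẑ = u`. -/
theorem SDEIM_exact_reconstruction (N m n : ℕ) (hnm : n < m) (hmN : m ≤ N)
    (Φ : Matrix (Fin N) (Fin m) ℝ) (S : Matrix (Fin N) (Fin n) ℝ)
    (hΦ : Φᵀ * Φ = 1) (hS : Sᵀ * S = 1)
    (M : Matrix (Fin n) (Fin m) ℝ) (hM : M = Sᵀ * Φ)
    (hMM : IsUnit (M * Mᵀ))
    (Mplus : Matrix (Fin m) (Fin n) ℝ) (hMp : Mplus = Mᵀ * (M * Mᵀ)⁻¹)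
    (Z : Matrix (Fin m) (Fin (m - n)) ℝ) (hZ : Zᵀ * Z = 1) (hMZ : M * Z = 0)
    (u : Fin N → ℝ) (hu : Φ *ᵥ (Φᵀ *ᵥ u) = u) :
    Φ *ᵥ (Mplus *ᵥ (Sᵀ *ᵥ u)) + Φ *ᵥ ((Z * Zᵀ * Φᵀ) *ᵥ u) = u :=
  SDEIM_exact_reconstruction_general N m n Φ S M hM hMM Mplus hMp Z hZ hMZ u hu
end

section
/- Let P : ℝ^N → ℝ^N be an orthogonal projection (linear, P² = P, self-adjoint with respect to the Euclidean inner product), f : ℝ^N → ℝ^N a map, and ρ < 0 a real number such that ⟨a − b, P(f(a)) − P(f(b))⟩ ≤ ρ‖a − b‖² for all a, b ∈ ℝ^N (i.e., g := P ∘ f is one-sided Lipschitz with negative constant ρ). Let u, ũ : ℝ → ℝ^N be differentiable curves such that for all t ≥ 0, (d/dt)(ũ(t) − u(t)) = P(f(ũ(t)) − f(u(t))). Then ‖ũ(t) − u(t)‖ ≤ ‖ũ(0) − u(0)‖ · e^{ρt} for all t ≥ 0; in particular, since ρ < 0, the DAS-DEIM reconstruction error ‖ũ(t) − u(t)‖ converges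 to 0 exponentially fast as t → ∞. -/
/-- Convergence of DAS-DEIM (Theorem 4.5, abstract form): if `P` is an orthogonal
projection, `g = P ∘ f` is one-sided Lipschitz with a negative constant `ρ < 0`, and the
error `e(t) = ũ(t) − u(t)` between two differentiable curves satisfies
`ė = P(f(ũ) − f(u))` for all `t ≥ 0`, then `‖ũ(t) − u(t)‖ ≤ ‖ũ(0) − u(0)‖ e^{ρt}` for all
`t ≥ 0`; in particular the reconstruction error converges to `0` (exponentially fast) as
`t → ∞`. -/
theorem DAS_DEIM_convergence (N : ℕ) (ρ : ℝ) (hρ : ρ < 0)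
    (P : EuclideanSpace ℝ (Fin N) →ₗ[ℝ] EuclideanSpace ℝ (Fin N))
    (hidem : ∀ x, P (P x) = P x)
    (hsa : ∀ x y, @inner ℝ _ _ (P x) y = @inner ℝ _ _ x (P y))
    (f : EuclideanSpace ℝ (Fin N) → EuclideanSpace ℝ (Fin N))
    (hosl : ∀ a b, @inner ℝ _ _ (a - b) (P (f a) - P (f b)) ≤ ρ * ‖a - b‖ ^ 2)
    (u utilde : ℝ → EuclideanSpace ℝ (Fin N))
    (hu : Differentiable ℝ u) (hut : Differentiable ℝ utilde)
    (hderiv : ∀ t, 0 ≤ t →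
      deriv (fun s => utilde s - u s) t = P (f (utilde t) - f (u t))) :
    (∀ t, 0 ≤ t → ‖utilde t - u t‖ ≤ ‖utilde 0 - u 0‖ * Real.exp (ρ * t)) ∧
      Filter.Tendsto (fun t => ‖utilde t - u t‖) Filter.atTop (nhds 0) := by
  set e : ℝ → EuclideanSpace ℝ (Fin N) := fun s => utilde s - u s with he
  have hediff : Differentiable ℝ e := hut.sub hu
  set v : ℝ → ℝ := fun s => ‖e s‖ ^ 2 with hv
  have hvd : ∀ s : ℝ, HasDerivAt v (2 * @inner ℝ _ _ (e s) (deriv e s)) s := by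
    intro s
    have h1 : HasDerivAt e (deriv e s) s := (hediff s).hasDerivAt
    have h2 := h1.inner ℝ h1
    have hfun : (fun t => (@inner ℝ _ _ (e t) (e t) : ℝ)) = v :=
      funext fun t => real_inner_self_eq_norm_sq _
    rw [hfun] at h2
    refine h2.congr_deriv ?_
    rw [real_inner_comm (deriv e s) (e s)]; ring
  have main : ∀ t, 0 ≤ t → ‖e t‖ ≤ ‖e 0‖ * Real.exp (ρ * t) := by
    intro t ht
    have hb : ∀ x ∈ Set.Ico (0:ℝ) t,
        (fun s => 2 * @inner ℝ _ _ (e s) (deriv e s)) x ≤ (2*ρ) * v x + 0 := by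
      intro x hx
      have hdx : deriv e x = P (f (utilde x)) - P (f (u x)) := by
        rw [show deriv e x = deriv (fun s => utilde s - u s) x from rfl,
          hderiv x hx.1, map_sub]
      have h := hosl (utilde x) (u x)
      simp only [hdx, hv]
      have : @inner ℝ _ _ (e x) (P (f (utilde x)) - P (f (u x))) ≤ ρ * ‖e x‖ ^ 2 := h
      nlinarith
    have hG := le_gronwallBound_of_liminf_deriv_right_le
      (f := v) (f' := fun s => 2 * @inner ℝ _ _ (e s) (deriv e s))
      (δ := v 0) (K := 2*ρ) (ε := 0) (a := 0) (b := t)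
      (fun x _ => ((hvd x).continuousAt).continuousWithinAt)
      (fun x _ r hr => ((hvd x).hasDerivWithinAt.liminf_right_slope_le hr))
      le_rfl hb t (Set.right_mem_Icc.2 ht)
    rw [sub_zero, gronwallBound_ε0] at hG
    have h0 : (0:ℝ) ≤ ‖e 0‖ * Real.exp (ρ * t) :=
      mul_nonneg (norm_nonneg _) (Real.exp_pos _).le
    have hsq : ‖e t‖ ^ 2 ≤ (‖e 0‖ * Real.exp (ρ * t)) ^ 2 := by
      calc ‖e t‖ ^ 2 ≤ ‖e 0‖ ^ 2 * Real.exp (2*ρ*t) := hG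
        _ = (‖e 0‖ * Real.exp (ρ * t)) ^ 2 := by
            rw [mul_pow, ← Real.exp_nat_mul]; ring_nf
    have := Real.sqrt_le_sqrt hsq
    rwa [Real.sqrt_sq (norm_nonneg _), Real.sqrt_sq h0] at this
  refine ⟨main, ?_⟩
  have hg : Filter.Tendsto (fun t : ℝ => ‖e 0‖ * Real.exp (ρ * t))
      Filter.atTop (nhds 0) := by
    have hexp : Filter.Tendsto (fun t : ℝ => Real.exp (ρ * t)) Filter.atTop (nhds 0) :=
      Real.tendsto_exp_atBot.comp (Filter.tendsto_id.const_mul_atTop_of_neg hρ)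
    simpa using hexp.const_mul (‖e 0‖)
  refine squeeze_zero' (Filter.Eventually.of_forall fun t => norm_nonneg _)
    ?_ hg
  filter_upwards [Filter.eventually_ge_atTop (0:ℝ)] with t ht using main t ht
end
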